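/- Every barycenter P̄ of the discrete probability measures P₁,…,P_N satisfies supp(P̄) ⊆ S; in particular every barycenter is a discrete probability measure. -/

import Mathlib

open MeasureTheory ENNReal
open scoped NNReal

noncomputable section

/-- Euclidean space `ℝ^d`. -/
abbrev Euc (d : ℕ) := EuclideanSpace ℝ (Fin d)

/-- The (topological) support of a measure on `ℝ^d`: the set of points all of whose
neighborhoods have positive measure. -/
def msupp {d : ℕ} (μ : MeasureTheory.Measure (Euc d)) : Set (Euc d) :=
  {x | ∀ U ∈ nhds x, μ U ≠ 0}

/-- A discrete probability measure: a probability measure with finite support. -/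
def IsDiscreteProb {d : ℕ} (μ : MeasureTheory.Measure (Euc d)) : Prop :=
  IsProbabilityMeasure μ ∧ (msupp μ).Finite

/-- Finite second moment. -/
def FinSecondMoment {d : ℕ} (μ : MeasureTheory.Measure (Euc d)) : Prop :=
  ∫⁻ x, (‖x‖₊ : ℝ≥0∞) ^ 2 ∂μ < ⊤

/-- A coupling of `P` and `Q`: a measure on the product whose first marginal is `P`
and second marginal is `Q`. -/
def IsCoupling {d : ℕ} (γ : MeasureTheory.Measure (Euc d × Euc d))
    (P Q : MeasureTheory.Measure (Euc d)) : Prop :=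
  γ.map Prod.fst = P ∧ γ.map Prod.snd = Q

/-- Squared 2-Wasserstein distance: infimum of the quadratic transport cost over couplings. -/
def W2sq {d : ℕ} (P Q : MeasureTheory.Measure (Euc d)) : ℝ≥0∞ :=
  ⨅ γ ∈ {γ | IsCoupling γ P Q}, ∫⁻ p, (‖p.1 - p.2‖₊ : ℝ≥0∞) ^ 2 ∂γ

/-- A barycenter of `P 0, …, P (N-1)`: a probability measure with finite second moment
minimizing the sum of squared Wasserstein distances over all such measures. -/
def IsBarycenter {d N : ℕ} (P : Fin N → MeasureTheory.Measure (Euc d))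
    (Pbar : MeasureTheory.Measure (Euc d)) : Prop :=
  IsProbabilityMeasure Pbar ∧ FinSecondMoment Pbar ∧
    ∀ Q : MeasureTheory.Measure (Euc d), IsProbabilityMeasure Q → FinSecondMoment Q →
      ∑ i, W2sq Pbar (P i) ≤ ∑ i, W2sq Q (P i)

/-- A multi-coupling of `P 0, …, P (N-1)`: a probability measure on `(ℝ^d)^N` whose
`i`-th coordinate marginal is `P i`. -/
def IsMultiCoupling {d N : ℕ} (π : MeasureTheory.Measure (Fin N → Euc d))
    (P : Fin N → MeasureTheory.Measure (Euc d)) : Prop :=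
  IsProbabilityMeasure π ∧ ∀ i, π.map (fun x => x i) = P i

/-- The averaging map `(x₁, …, x_N) ↦ (x₁ + ⋯ + x_N)/N`. -/
def avgMap (d N : ℕ) : (Fin N → Euc d) → Euc d := fun x => (N : ℝ)⁻¹ • ∑ i, x i

/-- The set `S` of all centroids of support points, one from each measure. -/
def centroidSet {d N : ℕ} (P : Fin N → MeasureTheory.Measure (Euc d)) : Set (Euc d) :=
  {s | ∃ x : Fin N → Euc d, (∀ i, x i ∈ msupp (P i)) ∧ s = (N : ℝ)⁻¹ • ∑ i, x i}

section Aux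

variable {d : ℕ}

lemma msupp_compl_null (μ : Measure (Euc d)) : μ (msupp μ)ᶜ = 0 := by
  have h : ∀ x ∈ (msupp μ)ᶜ, ∃ U, U ∈ nhds x ∧ μ U = 0 := by
    intro x hx
    by_contra hcon
    push_neg at hcon
    exact hx fun U hU => hcon U hU
  choose! U hU hU0 using h
  obtain ⟨t, hts, htc, hcov⟩ := TopologicalSpace.countable_cover_nhdsWithin
    (f := U) (s := (msupp μ)ᶜ) fun x hx => mem_nhdsWithin_of_mem_nhds (hU x hx)
  refine measure_mono_null hcov ?_
  exact (measure_biUnion_null_iff htc).2 fun x hx => hU0 x (hts hx)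

lemma msupp_ae (μ : Measure (Euc d)) : ∀ᵐ x ∂μ, x ∈ msupp μ := by
  rw [MeasureTheory.ae_iff]
  exact msupp_compl_null μ

lemma finSecondMoment_of_finite_msupp {μ : Measure (Euc d)} [IsFiniteMeasure μ]
    (h : (msupp μ).Finite) : FinSecondMoment μ := by
  set C : ℝ≥0 := h.toFinset.sup fun b => ‖b‖₊ ^ 2 with hC
  have hb : ∀ᵐ x ∂μ, (‖x‖₊ : ℝ≥0∞) ^ 2 ≤ (C : ℝ≥0∞) := by
    filter_upwards [msupp_ae μ] with x hx
    have : ‖x‖₊ ^ 2 ≤ C := Finset.le_sup (f := fun b => ‖b‖₊ ^ 2) (h.mem_toFinset.2 hx)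
    exact_mod_cast this
  calc ∫⁻ x, (‖x‖₊ : ℝ≥0∞) ^ 2 ∂μ ≤ ∫⁻ _, (C : ℝ≥0∞) ∂μ := lintegral_mono_ae hb
    _ = C * μ Set.univ := lintegral_const _
    _ < ⊤ := ENNReal.mul_lt_top ENNReal.coe_lt_top (measure_lt_top μ _)

end Aux

section Glue

variable {d N : ℕ}

lemma wd_finset_sum {ι : Type*} (μ : Measure (Euc d)) (s : Finset ι) (g : ι → Euc d → ℝ≥0∞)
    (hg : ∀ a, Measurable (g a)) :
    μ.withDensity (fun y => ∑ a ∈ s, g a y) = ∑ a ∈ s, μ.withDensity (g a) := by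
  ext t ht
  rw [withDensity_apply _ ht, Measure.finset_sum_apply,
    lintegral_finset_sum s fun a _ => hg a]
  exact Finset.sum_congr rfl fun a _ => (withDensity_apply _ ht).symm

lemma rnDeriv_finset_sum {ι : Type*} (ν : Measure (Euc d)) [IsFiniteMeasure ν] (s : Finset ι)
    (μ : ι → Measure (Euc d)) (hfin : ∀ a, IsFiniteMeasure (μ a)) :
    (fun y => ∑ a ∈ s, (μ a).rnDeriv ν y) =ᵐ[ν] (∑ a ∈ s, μ a).rnDeriv ν := by
  classical
  induction s using Finset.induction_on with
  | empty => simp only [Finset.sum_empty]; exact (Measure.rnDeriv_zero ν).symm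
  | @insert a s ha ih =>
    haveI : IsFiniteMeasure (∑ b ∈ s, μ b) := by
      constructor
      rw [Measure.finset_sum_apply]
      exact ENNReal.sum_lt_top.2 fun b _ => (hfin b).measure_univ_lt_top
    haveI := hfin a
    have h1 := Measure.rnDeriv_add' (μ a) (∑ b ∈ s, μ b) ν
    filter_upwards [ih, h1] with y hy1 hy2
    rw [Finset.sum_insert ha, Finset.sum_insert ha, hy2, Pi.add_apply, hy1]

end Glue

section GlueMain

variable {d N : ℕ}

lemma glue (P : Fin N → Measure (Euc d)) (hP : ∀ i, IsDiscreteProb (P i))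
    (Pbar : Measure (Euc d)) [IsProbabilityMeasure Pbar]
    (γ : Fin N → Measure (Euc d × Euc d)) (hγ : ∀ i, IsCoupling (γ i) Pbar (P i)) :
    ∃ π : Measure (Euc d × (Fin N → Euc d)),
      π.map Prod.fst = Pbar ∧
      (∀ i, π.map (fun p => (p.1, p.2 i)) = γ i) ∧
      (∀ᵐ p ∂π, ∀ i, p.2 i ∈ msupp (P i)) := by
  classical
  haveI hPi := fun i => (hP i).1
  -- finite supports
  set A : Fin N → Finset (Euc d) := fun i => (hP i).2.toFinset with hA
  have hAmem : ∀ i b, b ∈ A i ↔ b ∈ msupp (P i) := fun i b => (hP i).2.mem_toFinset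
  have hAnull : ∀ i, P i (↑(A i))ᶜ = 0 := by
    intro i
    have : (↑(A i) : Set (Euc d)) = msupp (P i) := (hP i).2.coe_toFinset
    rw [this]
    exact msupp_compl_null (P i)
  -- conditional measures
  set μ : ∀ _ : Fin N, Euc d → Measure (Euc d) :=
    fun i b => ((γ i).restrict (Set.univ ×ˢ {b})).map Prod.fst with hμdef
  have hμap : ∀ i b (s : Set (Euc d)), MeasurableSet s → μ i b s = γ i (s ×ˢ {b}) := by
    intro i b s hs
    rw [hμdef]
    rw [Measure.map_apply measurable_fst hs,
      Measure.restrict_apply (measurable_fst hs)]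
    congr 1
    ext ⟨y, c⟩
    simp only [Set.mem_inter_iff, Set.mem_preimage, Set.mem_prod, Set.mem_univ, true_and,
      Set.mem_singleton_iff]
  have hμle : ∀ i b, μ i b ≤ Pbar := by
    intro i b
    rw [Measure.le_iff]
    intro s hs
    rw [hμap i b s hs, ← (hγ i).1, Measure.map_apply measurable_fst hs]
    refine measure_mono fun p hp => ?_
    rw [Set.mem_prod] at hp
    exact hp.1
  have hμac : ∀ i b, μ i b ≪ Pbar := fun i b => Measure.absolutelyContinuous_of_le (hμle i b)
  haveI hμfin : ∀ i b, IsFiniteMeasure (μ i b) := fun i b => isFiniteMeasure_of_le _ (hμle i b)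
  -- sum over support is Pbar
  have hsliceNull : ∀ i, γ i (Set.univ ×ˢ (↑(A i) : Set (Euc d))ᶜ) = 0 := by
    intro i
    have h1 : γ i (Prod.snd ⁻¹' (↑(A i) : Set (Euc d))ᶜ) = P i (↑(A i))ᶜ := by
      rw [← (hγ i).2, Measure.map_apply measurable_snd (A i).measurableSet.compl]
    refine measure_mono_null (fun p hp => ?_) (h1.trans (hAnull i))
    exact hp.2
  have hμsum : ∀ i, ∑ b ∈ A i, μ i b = Pbar := by
    intro i
    ext s hs
    rw [Measure.finset_sum_apply]
    have h1 : ∀ b ∈ A i, μ i b s = γ i (s ×ˢ {b}) := fun b _ => hμap i b s hs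
    rw [Finset.sum_congr rfl h1,
      ← measure_biUnion_finset ?_ (fun b _ => hs.prod (measurableSet_singleton b))]
    · have h2 : (⋃ b ∈ A i, s ×ˢ ({b} : Set (Euc d))) = s ×ˢ (↑(A i) : Set (Euc d)) := by
        ext ⟨y, c⟩
        simp only [Set.mem_iUnion, Set.mem_prod, Set.mem_singleton_iff, Finset.mem_coe]
        constructor
        · rintro ⟨b, hbA, hy, rfl⟩
          exact ⟨hy, hbA⟩
        · rintro ⟨hy, hc⟩
          exact ⟨c, hc, hy, rfl⟩
      rw [h2]
      have h3 : γ i (Prod.fst ⁻¹' s) = Pbar s := by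
        rw [← (hγ i).1, Measure.map_apply measurable_fst hs]
      rw [← h3]
      refine le_antisymm (measure_mono fun p hp => ?_) ?_
      · rw [Set.mem_prod] at hp
        exact hp.1
      calc γ i (Prod.fst ⁻¹' s)
          ≤ γ i (Prod.fst ⁻¹' s ∩ s ×ˢ (↑(A i) : Set (Euc d)))
            + γ i (Prod.fst ⁻¹' s \ s ×ˢ (↑(A i) : Set (Euc d))) :=
            measure_le_inter_add_diff _ _ _
        _ ≤ γ i (s ×ˢ (↑(A i) : Set (Euc d))) + 0 := by
            refine add_le_add (measure_mono fun p hp => hp.2) ?_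
            refine le_of_eq (measure_mono_null (fun p hp => ?_) (hsliceNull i))
            exact ⟨trivial, fun hc => hp.2 ⟨hp.1, hc⟩⟩
        _ = γ i (s ×ˢ (↑(A i) : Set (Euc d))) := add_zero _
    · intro b _ c _ hbc
      rw [Function.onFun]
      rw [Set.disjoint_left]
      rintro ⟨y, e⟩ ⟨_, he1⟩ ⟨_, he2⟩
      simp only [Set.mem_singleton_iff] at he1 he2
      exact hbc (he1 ▸ he2)
  -- densities
  set f : Fin N → Euc d → Euc d → ℝ≥0∞ := fun i b => (μ i b).rnDeriv Pbar with hfdef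
  have hfm : ∀ i b, Measurable (f i b) := fun i b => Measure.measurable_rnDeriv _ _
  have hwdf : ∀ i b, Pbar.withDensity (f i b) = μ i b :=
    fun i b => by haveI := hμfin i b; haveI : SigmaFinite Pbar := inferInstance; haveI : SFinite (μ i b) := inferInstance; exact Measure.withDensity_rnDeriv_eq (μ i b) Pbar (hμac i b)
  have hf1 : ∀ i, (fun y => ∑ b ∈ A i, f i b y) =ᵐ[Pbar] fun _ => 1 := by
    intro i
    have h1 := rnDeriv_finset_sum Pbar (A i) (μ i) (hμfin i)
    have h2 : (∑ b ∈ A i, μ i b).rnDeriv Pbar =ᵐ[Pbar] fun _ => 1 := by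
      rw [hμsum i]; exact Measure.rnDeriv_self Pbar
    filter_upwards [h1, h2] with y hy1 hy2
    rw [hy1, hy2]
  -- product densities
  set piA : Finset (Fin N → Euc d) := Fintype.piFinset A with hpiA
  set g : (Fin N → Euc d) → Euc d → ℝ≥0∞ := fun a y => ∏ i, f i (a i) y with hgdef
  have hgm : ∀ a, Measurable (g a) := fun a =>
    Finset.measurable_prod _ fun i _ => hfm i (a i)
  set ν : (Fin N → Euc d) → Measure (Euc d) := fun a => Pbar.withDensity (g a) with hνdef
  have hνsum : ∑ a ∈ piA, ν a = Pbar := by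
    rw [hνdef, ← wd_finset_sum Pbar piA g hgm]
    have hpt : ∀ y, ∑ a ∈ piA, g a y = ∏ i, ∑ b ∈ A i, f i b y := by
      intro y
      rw [Finset.prod_univ_sum]
    have hae : (fun y => ∑ a ∈ piA, g a y) =ᵐ[Pbar] fun _ => 1 := by
      have hall : ∀ᵐ y ∂Pbar, ∀ i, ∑ b ∈ A i, f i b y = 1 :=
        Filter.eventually_all.2 fun i => hf1 i
      filter_upwards [hall] with y hy
      rw [hpt y, Finset.prod_congr rfl fun i _ => hy i, Finset.prod_const_one]
    rw [withDensity_congr_ae hae]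
    exact withDensity_one
  -- fiber sums
  have hfiber : ∀ i, ∀ b ∈ A i,
      ∑ a ∈ piA.filter (fun a => a i = b), ν a = μ i b := by
    intro i b hb
    have hfe : piA.filter (fun a => a i = b) = Fintype.piFinset (Function.update A i {b}) := by
      ext a
      simp only [Finset.mem_filter, Fintype.mem_piFinset, hpiA]
      constructor
      · rintro ⟨h1, h2⟩ j
        rcases eq_or_ne j i with rfl | hj
        · rw [Function.update_self]
          simp [h2]
        · rw [Function.update_of_ne hj]
          exact h1 j
      · intro h
        refine ⟨fun j => ?_, ?_⟩
        · rcases eq_or_ne j i with rfl | hj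
          · have := h j
            rw [Function.update_self] at this
            simp only [Finset.mem_singleton] at this
            exact this ▸ hb
          · have := h j
            rwa [Function.update_of_ne hj] at this
        · have := h i
          rw [Function.update_self] at this
          simpa using this
    rw [hfe, hνdef, ← wd_finset_sum Pbar _ g hgm]
    have hpt : ∀ y, ∑ a ∈ Fintype.piFinset (Function.update A i {b}), g a y
        = f i b y * ∏ j ∈ Finset.univ.erase i, ∑ c ∈ A j, f j c y := by
      intro y
      simp only [hgdef]
      rw [← Finset.prod_univ_sum (Function.update A i ({b} : Finset (Euc d))) (fun j c => f j c y)]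
      rw [← Finset.mul_prod_erase Finset.univ _ (Finset.mem_univ i)]
      congr 1
      · rw [Function.update_self, Finset.sum_singleton]
      · refine Finset.prod_congr rfl fun j hj => ?_
        rw [Function.update_of_ne (Finset.ne_of_mem_erase hj)]
    have hae : (fun y => ∑ a ∈ Fintype.piFinset (Function.update A i {b}), g a y)
        =ᵐ[Pbar] f i b := by
      have hall : ∀ᵐ y ∂Pbar, ∀ j ∈ Finset.univ.erase i, ∑ c ∈ A j, f j c y = 1 :=
        (Finset.eventually_all _).2 fun j _ => hf1 j
      filter_upwards [hall] with y hy
      rw [hpt y, Finset.prod_congr rfl hy, Finset.prod_const_one, mul_one]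
    rw [withDensity_congr_ae hae]
    exact hwdf i b
  -- the glued measure
  set π : Measure (Euc d × (Fin N → Euc d)) :=
    ∑ a ∈ piA, (ν a).map (fun y => (y, a)) with hπdef
  have hinc : ∀ a : Fin N → Euc d, Measurable fun y : Euc d => (y, a) :=
    fun a => measurable_id.prodMk measurable_const
  have hπap : ∀ E : Set (Euc d × (Fin N → Euc d)), MeasurableSet E →
      π E = ∑ a ∈ piA, ν a {y | (y, a) ∈ E} := by
    intro E hE
    rw [hπdef, Measure.finset_sum_apply]
    exact Finset.sum_congr rfl fun a _ => Measure.map_apply (hinc a) hE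
  refine ⟨π, ?_, ?_, ?_⟩
  · -- first marginal
    ext s hs
    rw [Measure.map_apply measurable_fst hs, hπap _ (measurable_fst hs)]
    have h1 : ∀ a ∈ piA, ν a {y | (y, a) ∈ Prod.fst ⁻¹' s} = ν a s := by
      intro a _
      congr 1
    rw [Finset.sum_congr rfl h1, ← Measure.finset_sum_apply, hνsum]
  · -- i-th pair marginal
    intro i
    have hmi : Measurable fun p : Euc d × (Fin N → Euc d) => (p.1, p.2 i) :=
      measurable_fst.prodMk ((measurable_pi_apply i).comp measurable_snd)
    ext E hE
    rw [Measure.map_apply hmi hE, hπap _ (hmi hE)]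
    have hpre : ∀ a : Fin N → Euc d,
        {y : Euc d | (y, a) ∈ (fun p : Euc d × (Fin N → Euc d) => (p.1, p.2 i)) ⁻¹' E}
          = {y : Euc d | (y, a i) ∈ E} := fun a => rfl
    simp only [hpre]
    have hmapsto : ∀ a ∈ piA, a i ∈ A i := fun a ha => (Fintype.mem_piFinset.1 ha) i
    rw [← Finset.sum_fiberwise_of_maps_to hmapsto (fun a => ν a {y | (y, a i) ∈ E})]
    have hinner : ∀ b ∈ A i,
        ∑ a ∈ piA.filter (fun a => a i = b), ν a {y | (y, a i) ∈ E}
          = γ i (E ∩ Set.univ ×ˢ {b}) := by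
      intro b hb
      have h1 : ∀ a ∈ piA.filter (fun a => a i = b),
          ν a {y | (y, a i) ∈ E} = ν a {y | (y, b) ∈ E} := by
        intro a ha
        rw [(Finset.mem_filter.1 ha).2]
      rw [Finset.sum_congr rfl h1, ← Measure.finset_sum_apply, hfiber i b hb]
      have hpre : MeasurableSet {y : Euc d | (y, b) ∈ E} :=
        (measurable_id.prodMk measurable_const : Measurable fun y : Euc d => (y, b)) hE
      rw [hμap i b _ hpre]
      congr 1
      ext ⟨y, c⟩
      constructor
      · rintro ⟨hy, hc⟩
        simp only [Set.mem_singleton_iff] at hc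
        subst hc
        exact ⟨hy, trivial, rfl⟩
      · rintro ⟨hy, -, hc⟩
        simp only [Set.mem_singleton_iff] at hc
        subst hc
        exact ⟨hy, rfl⟩
    rw [Finset.sum_congr rfl hinner,
      ← measure_biUnion_finset ?_ (fun b _ => hE.inter (MeasurableSet.univ.prod (measurableSet_singleton b)))]
    · have h2 : (⋃ b ∈ A i, E ∩ Set.univ ×ˢ ({b} : Set (Euc d))) = E ∩ Set.univ ×ˢ (↑(A i) : Set (Euc d)) := by
        ext ⟨y, c⟩
        simp only [Set.mem_iUnion, Set.mem_inter_iff, Set.mem_prod, Set.mem_univ, true_and,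
          Set.mem_singleton_iff, Finset.coe_sort_coe]
        constructor
        · rintro ⟨b, hbA, hyE, rfl⟩
          exact ⟨hyE, hbA⟩
        · rintro ⟨hyE, hcA⟩
          exact ⟨c, hcA, hyE, rfl⟩
      rw [h2]
      refine le_antisymm (measure_mono Set.inter_subset_left) ?_
      calc γ i E ≤ γ i (E ∩ Set.univ ×ˢ (↑(A i) : Set (Euc d)))
            + γ i (E \ Set.univ ×ˢ (↑(A i) : Set (Euc d))) := measure_le_inter_add_diff _ _ _
        _ ≤ γ i (E ∩ Set.univ ×ˢ (↑(A i) : Set (Euc d))) + 0 := by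
            refine add_le_add le_rfl ?_
            refine le_of_eq (measure_mono_null (fun p hp => ?_) (hsliceNull i))
            exact ⟨trivial, fun hc => hp.2 ⟨trivial, hc⟩⟩
        _ = _ := add_zero _
    · intro b _ c _ hbc
      rw [Function.onFun, Set.disjoint_left]
      rintro ⟨y, e⟩ ⟨-, -, he1⟩ ⟨-, -, he2⟩
      simp only [Set.mem_singleton_iff] at he1 he2
      exact hbc (he1 ▸ he2)
  · -- support
    have hTm : MeasurableSet {p : Euc d × (Fin N → Euc d) | ∀ i, p.2 i ∈ msupp (P i)} := by
      have : {p : Euc d × (Fin N → Euc d) | ∀ i, p.2 i ∈ msupp (P i)}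
          = ⋂ i, (fun p : Euc d × (Fin N → Euc d) => p.2 i) ⁻¹' msupp (P i) := by
        ext p; simp
      rw [this]
      exact MeasurableSet.iInter fun i =>
        ((measurable_pi_apply i).comp measurable_snd) ((hP i).2.measurableSet)
    rw [MeasureTheory.ae_iff]
    have hset : {p : Euc d × (Fin N → Euc d) | ¬ ∀ i, p.2 i ∈ msupp (P i)}
        = {p : Euc d × (Fin N → Euc d) | ∀ i, p.2 i ∈ msupp (P i)}ᶜ := rfl
    rw [hset, hπap _ hTm.compl]
    refine Finset.sum_eq_zero fun a ha => ?_
    have : {y : Euc d | (y, a) ∈ {p : Euc d × (Fin N → Euc d) | ∀ i, p.2 i ∈ msupp (P i)}ᶜ} = ∅ := by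
      ext y
      simp only [Set.mem_setOf_eq, Set.mem_compl_iff, Set.mem_empty_iff_false, iff_false,
        not_not]
      intro i
      exact (hAmem i (a i)).1 ((Fintype.mem_piFinset.1 ha) i)
    rw [this, measure_empty]

end GlueMain

section Analytic

variable {d N : ℕ}

lemma centroid_finite (P : Fin N → Measure (Euc d)) (hP : ∀ i, IsDiscreteProb (P i)) :
    (centroidSet P).Finite := by
  have hsub : centroidSet P ⊆
      (fun x : Fin N → Euc d => (N : ℝ)⁻¹ • ∑ i, x i) '' (Set.pi Set.univ fun i => msupp (P i)) := by
    rintro s ⟨x, hx, rfl⟩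
    exact ⟨x, fun i _ => hx i, rfl⟩
  exact ((Set.Finite.pi fun i => (hP i).2).image _).subset hsub

lemma sq_coe_eq_ofReal (z : Euc d) : ((‖z‖₊ : ℝ≥0∞)) ^ 2 = ENNReal.ofReal (‖z‖ ^ 2) := by
  rw [← show ENNReal.ofReal ‖z‖ = (‖z‖₊ : ℝ≥0∞) from ofReal_norm z, ← ENNReal.ofReal_pow (norm_nonneg z)]

lemma pointwise_ineq (hN : 0 < N) (y : Euc d) (a : Fin N → Euc d) :
    (∑ i, ((‖avgMap d N a - a i‖₊ : ℝ≥0∞)) ^ 2)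
      + (N : ℝ≥0∞) * ((‖y - avgMap d N a‖₊ : ℝ≥0∞)) ^ 2
      ≤ ∑ i, ((‖y - a i‖₊ : ℝ≥0∞)) ^ 2 := by
  set m := avgMap d N a with hm
  have hsum0 : ∑ i, (m - a i) = 0 := by
    rw [Finset.sum_sub_distrib, Finset.sum_const, Finset.card_univ, Fintype.card_fin]
    have hsm : (N : ℕ) • m = ∑ i, a i := by
      rw [← Nat.cast_smul_eq_nsmul ℝ, hm, avgMap, smul_smul,
        mul_inv_cancel₀ (by exact_mod_cast hN.ne' : (N : ℝ) ≠ 0), one_smul]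
    rw [hsm, sub_self]
  have hre : ∑ i, ‖y - a i‖ ^ 2 = (∑ i, ‖m - a i‖ ^ 2) + (N : ℝ) * ‖y - m‖ ^ 2 := by
    have hterm : ∀ i : Fin N, ‖y - a i‖ ^ 2
        = ‖y - m‖ ^ 2 + 2 * (inner ℝ (y - m) (m - a i) : ℝ) + ‖m - a i‖ ^ 2 := by
      intro i
      rw [show y - a i = (y - m) + (m - a i) by abel]
      exact norm_add_sq_real _ _
    rw [Finset.sum_congr rfl fun i _ => hterm i]
    rw [Finset.sum_add_distrib, Finset.sum_add_distrib]
    have h1 : ∑ _i : Fin N, ‖y - m‖ ^ 2 = (N : ℝ) * ‖y - m‖ ^ 2 := by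
      rw [Finset.sum_const, Finset.card_univ, Fintype.card_fin, nsmul_eq_mul]
    have h2 : ∑ i : Fin N, 2 * (inner ℝ (y - m) (m - a i) : ℝ) = 0 := by
      rw [← Finset.mul_sum, ← inner_sum, hsum0, inner_zero_right, mul_zero]
    rw [h1, h2]
    ring
  have hcoe : ∀ z : Euc d, ((‖z‖₊ : ℝ≥0∞)) ^ 2 = ENNReal.ofReal (‖z‖ ^ 2) := sq_coe_eq_ofReal
  simp only [hcoe]
  rw [← ENNReal.ofReal_sum_of_nonneg fun i _ => sq_nonneg _,
    ← ENNReal.ofReal_sum_of_nonneg fun i _ => sq_nonneg _,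
    show ((N : ℝ≥0∞)) = ENNReal.ofReal (N : ℝ) by simp,
    ← ENNReal.ofReal_mul (by positivity),
    ← ENNReal.ofReal_add (by positivity) (by positivity)]
  exact ENNReal.ofReal_le_ofReal (le_of_eq hre.symm)

lemma sq_norm_measurable : Measurable fun x : Euc d => ((‖x‖₊ : ℝ≥0∞)) ^ 2 :=
  (measurable_nnnorm.coe_nnreal_ennreal).pow_const 2

lemma cost_measurable : Measurable fun q : Euc d × Euc d => ((‖q.1 - q.2‖₊ : ℝ≥0∞)) ^ 2 :=
  (((measurable_fst.sub measurable_snd).nnnorm).coe_nnreal_ennreal).pow_const 2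

lemma W2sq_lt_top (μ ν : Measure (Euc d)) [IsProbabilityMeasure μ] [IsProbabilityMeasure ν]
    (hμ : FinSecondMoment μ) (hν : FinSecondMoment ν) : W2sq μ ν < ⊤ := by
  have hc : IsCoupling (μ.prod ν) μ ν := by
    constructor
    · exact Measure.fst_prod
    · exact Measure.snd_prod
  have hle : W2sq μ ν ≤ ∫⁻ p, ((‖p.1 - p.2‖₊ : ℝ≥0∞)) ^ 2 ∂(μ.prod ν) := by
    rw [W2sq]
    exact iInf_le_of_le (μ.prod ν) (iInf_le_of_le hc le_rfl)
  have hpt : ∀ p : Euc d × Euc d, ((‖p.1 - p.2‖₊ : ℝ≥0∞)) ^ 2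
      ≤ 4 * (((‖p.1‖₊ : ℝ≥0∞)) ^ 2 + ((‖p.2‖₊ : ℝ≥0∞)) ^ 2) := by
    intro p
    have h1 : ((‖p.1 - p.2‖₊ : ℝ≥0∞)) ≤ (‖p.1‖₊ : ℝ≥0∞) + (‖p.2‖₊ : ℝ≥0∞) := by
      exact_mod_cast nnnorm_sub_le p.1 p.2
    set x : ℝ≥0∞ := (‖p.1‖₊ : ℝ≥0∞)
    set y : ℝ≥0∞ := (‖p.2‖₊ : ℝ≥0∞)
    calc ((‖p.1 - p.2‖₊ : ℝ≥0∞)) ^ 2 ≤ (x + y) ^ 2 := pow_le_pow_left₀ zero_le h1 2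
      _ ≤ (2 * max x y) ^ 2 := by
          refine pow_le_pow_left₀ zero_le ?_ 2
          rw [two_mul]
          exact add_le_add (le_max_left _ _) (le_max_right _ _)
      _ = 4 * (max x y) ^ 2 := by ring
      _ ≤ 4 * (x ^ 2 + y ^ 2) := by
          refine mul_le_mul_right ?_ 4
          rcases le_total x y with h | h
          · rw [max_eq_right h]
            exact le_add_self
          · rw [max_eq_left h]
            exact le_self_add
  refine lt_of_le_of_lt hle (lt_of_le_of_lt (lintegral_mono hpt) ?_)
  have e1 : ∫⁻ p, ((‖p.1‖₊ : ℝ≥0∞)) ^ 2 ∂(μ.prod ν) = ∫⁻ x, ((‖x‖₊ : ℝ≥0∞)) ^ 2 ∂μ := by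
    have h := lintegral_map (μ := μ.prod ν) sq_norm_measurable measurable_fst
    rw [hc.1] at h
    exact h.symm
  have e2 : ∫⁻ p, ((‖p.2‖₊ : ℝ≥0∞)) ^ 2 ∂(μ.prod ν) = ∫⁻ x, ((‖x‖₊ : ℝ≥0∞)) ^ 2 ∂ν := by
    have h := lintegral_map (μ := μ.prod ν) sq_norm_measurable measurable_snd
    rw [hc.2] at h
    exact h.symm
  have hm1 : Measurable fun x : Euc d × Euc d => ((‖x.1‖₊ : ℝ≥0∞)) ^ 2 :=
    sq_norm_measurable.comp measurable_fst
  have hm2 : Measurable fun x : Euc d × Euc d => ((‖x.2‖₊ : ℝ≥0∞)) ^ 2 :=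
    sq_norm_measurable.comp measurable_snd
  rw [lintegral_const_mul 4 (by exact hm1.add hm2 : Measurable fun x : Euc d × Euc d => ((‖x.1‖₊ : ℝ≥0∞)) ^ 2 + ((‖x.2‖₊ : ℝ≥0∞)) ^ 2), lintegral_add_left hm1]
  have : ∫⁻ p, ((‖p.1‖₊ : ℝ≥0∞)) ^ 2 ∂(μ.prod ν) + ∫⁻ p, ((‖p.2‖₊ : ℝ≥0∞)) ^ 2 ∂(μ.prod ν) < ⊤ := by
    rw [e1, e2]
    exact ENNReal.add_lt_top.2 ⟨hμ, hν⟩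
  exact ENNReal.mul_lt_top (by norm_num) this

end Analytic

section Key

variable {d N : ℕ}

lemma avg_measurable : Measurable (avgMap d N) := by
  have : Continuous (avgMap d N) := by
    unfold avgMap
    exact (continuous_finset_sum _ fun i _ => continuous_apply (A := fun _ : Fin N => Euc d) i).const_smul ((N : ℝ)⁻¹)
  exact this.measurable

lemma key_lemma (hN : 0 < N) (P : Fin N → Measure (Euc d))
    (hP : ∀ i, IsDiscreteProb (P i))
    (Pbar : Measure (Euc d)) (hPbar : IsBarycenter P Pbar) :
    msupp Pbar ⊆ centroidSet P := by
  classical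
  obtain ⟨hprob, hmom, hopt⟩ := hPbar
  haveI := hprob
  haveI := fun i => (hP i).1
  intro x₀ hx₀
  by_contra hx₀S
  have hSfin : (centroidSet P).Finite := centroid_finite P hP
  -- a radius around x₀ avoiding S
  obtain ⟨ε, hε, hball⟩ := Metric.isOpen_iff.1 hSfin.isClosed.isOpen_compl x₀ hx₀S
  set r : ℝ := ε / 2 with hrdef
  have hrpos : 0 < r := half_pos hε
  have hSd : ∀ y s, dist y x₀ < r → s ∈ centroidSet P → r ≤ dist y s := by
    intro y s hy hs
    have hxs : ε ≤ dist x₀ s := by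
      by_contra h
      push_neg at h
      exact hball (show s ∈ Metric.ball x₀ ε by rwa [Metric.mem_ball, dist_comm]) hs
    have htr := dist_triangle x₀ y s
    have : dist x₀ y < r := by rwa [dist_comm]
    rw [hrdef] at *
    linarith
  set B : Set (Euc d) := Metric.ball x₀ r with hBdef
  have hB : Pbar B ≠ 0 := hx₀ B (Metric.ball_mem_nhds x₀ hrpos)
  set δ : ℝ≥0∞ := ENNReal.ofReal (r ^ 2) * Pbar B with hδdef
  have hδ0 : δ ≠ 0 := by
    refine mul_ne_zero ?_ hB
    simpa using (ENNReal.ofReal_pos.2 (by positivity : (0:ℝ) < r ^ 2)).ne'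
  have hδtop : δ ≠ ⊤ := ENNReal.mul_ne_top ENNReal.ofReal_ne_top (measure_ne_top _ _)
  set W : ℝ≥0∞ := ∑ i, W2sq Pbar (P i) with hWdef
  have hWfin : W ≠ ⊤ := by
    rw [hWdef]
    refine (ENNReal.sum_lt_top.2 fun i _ => ?_).ne
    exact W2sq_lt_top _ _ hmom (finSecondMoment_of_finite_msupp (hP i).2)
  -- near-optimal couplings
  have hchoice : ∀ i, ∃ γ, IsCoupling γ Pbar (P i) ∧
      ∫⁻ p, ((‖p.1 - p.2‖₊ : ℝ≥0∞)) ^ 2 ∂γ ≤ W2sq Pbar (P i) + δ / 2 := by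
    intro i
    have hfin : W2sq Pbar (P i) ≠ ⊤ := by
      refine ne_top_of_le_ne_top hWfin ?_
      rw [hWdef]
      exact Finset.single_le_sum (f := fun i => W2sq Pbar (P i)) (fun j _ => zero_le)
        (Finset.mem_univ i)
    have hlt : W2sq Pbar (P i) < W2sq Pbar (P i) + δ / 2 := by
      refine ENNReal.lt_add_right hfin ?_
      simp only [ne_eq, ENNReal.div_eq_zero_iff, ENNReal.ofNat_ne_top, or_false]
      exact hδ0
    rw [W2sq, iInf_lt_iff] at hlt
    obtain ⟨γ, hγ⟩ := hlt
    rw [iInf_lt_iff] at hγ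
    obtain ⟨hγc, hγlt⟩ := hγ
    exact ⟨γ, hγc, hγlt.le⟩
  choose γ hγc hγcost using hchoice
  -- glue
  obtain ⟨π, hπfst, hπγ, hπae⟩ := glue P hP Pbar γ hγc
  have hπuniv : π Set.univ = 1 := by
    have h := congrArg (fun m : Measure (Euc d) => m Set.univ) hπfst
    simp only [Measure.map_apply measurable_fst MeasurableSet.univ, Set.preimage_univ,
      measure_univ] at h
    exact h
  haveI : IsProbabilityMeasure π := ⟨hπuniv⟩
  have havgm : Measurable fun p : Euc d × (Fin N → Euc d) => avgMap d N p.2 :=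
    avg_measurable.comp measurable_snd
  set Q : Measure (Euc d) := π.map (fun p => avgMap d N p.2) with hQdef
  haveI : IsProbabilityMeasure Q := Measure.isProbabilityMeasure_map havgm.aemeasurable
  have hπS : ∀ᵐ p ∂π, avgMap d N p.2 ∈ centroidSet P := by
    filter_upwards [hπae] with p hp
    exact ⟨p.2, hp, rfl⟩
  -- second moment of Q
  have hQmom : FinSecondMoment Q := by
    rw [FinSecondMoment, hQdef, lintegral_map sq_norm_measurable havgm]
    set C : ℝ≥0 := hSfin.toFinset.sup fun s => ‖s‖₊ ^ 2 with hCdef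
    calc ∫⁻ p, ((‖avgMap d N p.2‖₊ : ℝ≥0∞)) ^ 2 ∂π ≤ ∫⁻ _, (C : ℝ≥0∞) ∂π := by
          refine lintegral_mono_ae ?_
          filter_upwards [hπS] with p hp
          have : ‖avgMap d N p.2‖₊ ^ 2 ≤ C :=
            Finset.le_sup (f := fun s => ‖s‖₊ ^ 2) (hSfin.mem_toFinset.2 hp)
          exact_mod_cast this
      _ = C * π Set.univ := lintegral_const _
      _ < ⊤ := ENNReal.mul_lt_top ENNReal.coe_lt_top (measure_lt_top π _)
  -- cost of Q against P i
  have hpmi : ∀ i : Fin N, Measurable fun p : Euc d × (Fin N → Euc d) => (p.1, p.2 i) :=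
    fun i => measurable_fst.prodMk ((measurable_pi_apply i).comp measurable_snd)
  have hQcost : ∀ i, W2sq Q (P i) ≤ ∫⁻ p, ((‖avgMap d N p.2 - p.2 i‖₊ : ℝ≥0∞)) ^ 2 ∂π := by
    intro i
    have hmi : Measurable fun p : Euc d × (Fin N → Euc d) => (avgMap d N p.2, p.2 i) :=
      havgm.prodMk ((measurable_pi_apply i).comp measurable_snd)
    have hcoup : IsCoupling (π.map fun p => (avgMap d N p.2, p.2 i)) Q (P i) := by
      constructor
      · rw [Measure.map_map measurable_fst hmi]
        rfl
      · rw [Measure.map_map measurable_snd hmi]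
        have h1 : (Prod.snd ∘ fun p : Euc d × (Fin N → Euc d) => (avgMap d N p.2, p.2 i))
            = fun p : Euc d × (Fin N → Euc d) => p.2 i := rfl
        rw [h1]
        have h2 : (fun p : Euc d × (Fin N → Euc d) => p.2 i)
            = Prod.snd ∘ fun p : Euc d × (Fin N → Euc d) => (p.1, p.2 i) := rfl
        rw [h2, ← Measure.map_map measurable_snd (hpmi i), hπγ i, (hγc i).2]
    have hle : W2sq Q (P i) ≤ ∫⁻ q, ((‖q.1 - q.2‖₊ : ℝ≥0∞)) ^ 2
        ∂(π.map fun p => (avgMap d N p.2, p.2 i)) := by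
      rw [W2sq]
      exact iInf_le_of_le _ (iInf_le_of_le hcoup le_rfl)
    rwa [lintegral_map cost_measurable hmi] at hle
  -- main inequality chain
  have hpm : ∀ i : Fin N, Measurable fun p : Euc d × (Fin N → Euc d) =>
      ((‖avgMap d N p.2 - p.2 i‖₊ : ℝ≥0∞)) ^ 2 :=
    fun i => sq_norm_measurable.comp (havgm.sub ((measurable_pi_apply i).comp measurable_snd))
  have hGm : Measurable fun p : Euc d × (Fin N → Euc d) =>
      ((‖p.1 - avgMap d N p.2‖₊ : ℝ≥0∞)) ^ 2 :=
    sq_norm_measurable.comp (measurable_fst.sub havgm)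
  have hineq1 : (∑ i, ∫⁻ p, ((‖avgMap d N p.2 - p.2 i‖₊ : ℝ≥0∞)) ^ 2 ∂π)
      + (N : ℝ≥0∞) * ∫⁻ p, ((‖p.1 - avgMap d N p.2‖₊ : ℝ≥0∞)) ^ 2 ∂π
      ≤ ∑ i, (W2sq Pbar (P i) + δ / 2) := by
    have e1 : ∑ i, ∫⁻ p, ((‖avgMap d N p.2 - p.2 i‖₊ : ℝ≥0∞)) ^ 2 ∂π
        = ∫⁻ p, ∑ i, ((‖avgMap d N p.2 - p.2 i‖₊ : ℝ≥0∞)) ^ 2 ∂π :=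
      (lintegral_finset_sum _ fun i _ => hpm i).symm
    have e2 : (N : ℝ≥0∞) * ∫⁻ p, ((‖p.1 - avgMap d N p.2‖₊ : ℝ≥0∞)) ^ 2 ∂π
        = ∫⁻ p, (N : ℝ≥0∞) * ((‖p.1 - avgMap d N p.2‖₊ : ℝ≥0∞)) ^ 2 ∂π :=
      (lintegral_const_mul _ hGm).symm
    rw [e1, e2, ← lintegral_add_left (Finset.measurable_sum _ fun i _ => hpm i)]
    calc ∫⁻ p, (∑ i, ((‖avgMap d N p.2 - p.2 i‖₊ : ℝ≥0∞)) ^ 2)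
          + (N : ℝ≥0∞) * ((‖p.1 - avgMap d N p.2‖₊ : ℝ≥0∞)) ^ 2 ∂π
        ≤ ∫⁻ p, ∑ i, ((‖p.1 - p.2 i‖₊ : ℝ≥0∞)) ^ 2 ∂π :=
          lintegral_mono fun p => pointwise_ineq hN p.1 p.2
      _ = ∑ i, ∫⁻ p, ((‖p.1 - p.2 i‖₊ : ℝ≥0∞)) ^ 2 ∂π :=
          lintegral_finset_sum _ fun i _ =>
            sq_norm_measurable.comp (measurable_fst.sub ((measurable_pi_apply i).comp measurable_snd))
      _ = ∑ i, ∫⁻ q, ((‖q.1 - q.2‖₊ : ℝ≥0∞)) ^ 2 ∂(γ i) := by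
          refine Finset.sum_congr rfl fun i _ => ?_
          rw [← hπγ i, lintegral_map cost_measurable (hpmi i)]
      _ ≤ ∑ i, (W2sq Pbar (P i) + δ / 2) := Finset.sum_le_sum fun i _ => hγcost i
  -- lower bound on the variance term
  have hlow : δ ≤ ∫⁻ p, ((‖p.1 - avgMap d N p.2‖₊ : ℝ≥0∞)) ^ 2 ∂π := by
    set E : Set (Euc d × (Fin N → Euc d)) :=
      (B ×ˢ Set.univ) ∩ {p | avgMap d N p.2 ∈ centroidSet P} with hEdef
    have hEm : MeasurableSet E :=
      (measurableSet_ball.prod MeasurableSet.univ).inter (havgm hSfin.measurableSet)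
    have hEb : ∀ p ∈ E, ENNReal.ofReal (r ^ 2) ≤ ((‖p.1 - avgMap d N p.2‖₊ : ℝ≥0∞)) ^ 2 := by
      rintro p ⟨hp1, hp2⟩
      have hp1' : dist p.1 x₀ < r := by
        have := hp1.1
        rwa [hBdef, Metric.mem_ball] at this
      have hd : r ≤ dist p.1 (avgMap d N p.2) := hSd p.1 _ hp1' hp2
      have h1 : ENNReal.ofReal r ≤ ((‖p.1 - avgMap d N p.2‖₊ : ℝ≥0∞)) := by
        rw [← show ENNReal.ofReal ‖p.1 - avgMap d N p.2‖ = (‖p.1 - avgMap d N p.2‖₊ : ℝ≥0∞) from ofReal_norm (p.1 - avgMap d N p.2)]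
        refine ENNReal.ofReal_le_ofReal ?_
        rwa [← dist_eq_norm]
      calc ENNReal.ofReal (r ^ 2) = (ENNReal.ofReal r) ^ 2 := by
            rw [← ENNReal.ofReal_pow hrpos.le]
        _ ≤ _ := pow_le_pow_left₀ zero_le h1 2
    have hEπ : Pbar B ≤ π E := by
      have h1 : π (B ×ˢ Set.univ) = Pbar B := by
        rw [← hπfst, Measure.map_apply measurable_fst measurableSet_ball, ← Set.prod_univ]
      have h2 : π ((B ×ˢ Set.univ) \ {p | avgMap d N p.2 ∈ centroidSet P}) = 0 := by
        refine measure_mono_null (fun p hp => ?_) (ae_iff.1 hπS)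
        exact hp.2
      calc Pbar B = π (B ×ˢ Set.univ) := h1.symm
        _ ≤ π E + π ((B ×ˢ Set.univ) \ {p | avgMap d N p.2 ∈ centroidSet P}) :=
            measure_le_inter_add_diff _ _ _
        _ = π E := by rw [h2, add_zero]
    calc δ = ENNReal.ofReal (r ^ 2) * Pbar B := hδdef
      _ ≤ ENNReal.ofReal (r ^ 2) * π E := mul_le_mul_right hEπ _
      _ = ∫⁻ _ in E, ENNReal.ofReal (r ^ 2) ∂π := (setLIntegral_const _ _).symm
      _ ≤ ∫⁻ p in E, ((‖p.1 - avgMap d N p.2‖₊ : ℝ≥0∞)) ^ 2 ∂π := by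
          refine lintegral_mono_ae ?_
          filter_upwards [ae_restrict_mem hEm] with p hp
          exact hEb p hp
      _ ≤ ∫⁻ p, ((‖p.1 - avgMap d N p.2‖₊ : ℝ≥0∞)) ^ 2 ∂π := setLIntegral_le_lintegral _ _
  -- combine with barycenter optimality
  have hQopt : W ≤ ∑ i, W2sq Q (P i) := hopt Q inferInstance hQmom
  have hfinal : W + (N : ℝ≥0∞) * δ ≤ W + (N : ℝ≥0∞) * (δ / 2) := by
    calc W + (N : ℝ≥0∞) * δ ≤ (∑ i, W2sq Q (P i)) + (N : ℝ≥0∞) * δ :=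
          add_le_add hQopt le_rfl
      _ ≤ (∑ i, ∫⁻ p, ((‖avgMap d N p.2 - p.2 i‖₊ : ℝ≥0∞)) ^ 2 ∂π)
          + (N : ℝ≥0∞) * ∫⁻ p, ((‖p.1 - avgMap d N p.2‖₊ : ℝ≥0∞)) ^ 2 ∂π :=
          add_le_add (Finset.sum_le_sum fun i _ => hQcost i) (mul_le_mul_right hlow _)
      _ ≤ ∑ i, (W2sq Pbar (P i) + δ / 2) := hineq1
      _ = W + (N : ℝ≥0∞) * (δ / 2) := by
          rw [Finset.sum_add_distrib, Finset.sum_const, Finset.card_univ, Fintype.card_fin,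
            nsmul_eq_mul, hWdef]
  have h2 : (N : ℝ≥0∞) * δ ≤ (N : ℝ≥0∞) * (δ / 2) :=
    (ENNReal.add_le_add_iff_left hWfin).1 hfinal
  have h3 : δ ≤ δ / 2 := by
    have hN0 : (N : ℝ≥0∞) ≠ 0 := Nat.cast_ne_zero.2 hN.ne'
    exact (ENNReal.mul_le_mul_iff_right hN0 (ENNReal.natCast_ne_top N)).1 h2
  exact absurd h3 (not_le.2 (ENNReal.half_lt_self hδ0 hδtop))

end Key

/-- every barycenter of the discrete probability measures `P₁, …, P_N` is
supported in the centroid set `S`; in particular it is a discrete probability measure. -/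
theorem stmt2 {d N : ℕ} (hN : 0 < N) (P : Fin N → MeasureTheory.Measure (Euc d))
    (hP : ∀ i, IsDiscreteProb (P i))
    (Pbar : MeasureTheory.Measure (Euc d)) (hPbar : IsBarycenter P Pbar) :
    msupp Pbar ⊆ centroidSet P ∧ IsDiscreteProb Pbar := by
  have hkey := key_lemma hN P hP Pbar hPbar
  exact ⟨hkey, hPbar.1, (centroid_finite P hP).subset hkey⟩
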